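/- arXiv:1902.11200 — 2 statements merged into one kernel-verified Lean document; each statement's English description precedes it below -/
import Mathlib

section
/- If there exist a positive definite matrix P and λ ∈ (0,1) such that E[λ² P − A(ξ_0)ᵀ P A(ξ_0)] is positive semidefinite, then for every deterministic initial state x_0 the system x_{k+1} = A(ξ_k) x_k satisfies E[x_{k+1}ᵀ P x_{k+1}] ≤ λ² E[x_kᵀ P x_k] for all k ∈ ℕ (i.e., the system is quadratically stable). -/
/-!
Expanding the quadratic form, `x_{k+1}ᵀ P x_{k+1} = x_kᵀ (A(ξ_k)ᵀ P A(ξ_k)) x_k`. The state `x_k`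
is a measurable function of `ξ_0, …, ξ_{k-1}`, hence independent of `ξ_k`, so in expectation
`A(ξ_k)ᵀ P A(ξ_k)` may be replaced by its mean `Q`, which is `E[A(ξ_0)ᵀ P A(ξ_0)]` because the
`ξ_k` are identically distributed. Since `λ² P - Q` is positive semidefinite,
`E[x_kᵀ Q x_k] ≤ λ² E[x_kᵀ P x_k]`. The same independence shows inductively that the coordinates
of `x_k` are square integrable, which makes all these expectations finite.
-/

open MeasureTheory ProbabilityTheory Matrix

local instance {k l : ℕ} : MeasurableSpace (Matrix (Fin k) (Fin l) ℝ) :=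
  inferInstanceAs (MeasurableSpace ((Fin k) → (Fin l) → ℝ))

theorem measurable_matrix_iff {β : Type*} [MeasurableSpace β] {m n : ℕ}
    {f : β → Matrix (Fin m) (Fin n) ℝ} :
    Measurable f ↔ ∀ i j, Measurable fun x => f x i j :=
  (measurable_pi_iff (g := fun x i => f x i)).trans (forall_congr' fun _ => measurable_pi_iff)

theorem Measurable.matrix_mulVec {β : Type*} [MeasurableSpace β] {m n : ℕ}
    {f : β → Matrix (Fin m) (Fin n) ℝ} {g : β → Fin n → ℝ} (hf : Measurable f)
    (hg : Measurable g) : Measurable fun x => f x *ᵥ g x := by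
  rw [measurable_matrix_iff] at hf
  rw [measurable_pi_iff] at hg ⊢
  intro i
  simp only [mulVec, dotProduct]
  fun_prop

theorem Measurable.matrix_transpose_mul_mul {β : Type*} [MeasurableSpace β] {m n : ℕ}
    {B : β → Matrix (Fin m) (Fin n) ℝ} (hB : Measurable B) (P : Matrix (Fin m) (Fin m) ℝ) :
    Measurable fun x => (B x)ᵀ * P * B x := by
  rw [measurable_matrix_iff] at hB ⊢
  intro a b
  simp only [Matrix.mul_apply, transpose_apply]
  fun_prop

section QuadraticForm

variable {ι κ R : Type*} [Fintype ι] [Fintype κ] [CommSemiring R]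

theorem dotProduct_mulVec_eq_sum (N : Matrix ι ι R) (v : ι → R) :
    v ⬝ᵥ (N *ᵥ v) = ∑ a, ∑ b, v a * v b * N a b := by
  simp only [dotProduct, mulVec, Finset.mul_sum]
  exact Finset.sum_congr rfl fun a _ => Finset.sum_congr rfl fun b _ => by ring

theorem mulVec_dotProduct_mulVec_mulVec (M : Matrix κ ι R) (P : Matrix κ κ R) (v : ι → R) :
    (M *ᵥ v) ⬝ᵥ (P *ᵥ (M *ᵥ v)) = v ⬝ᵥ ((Mᵀ * P * M) *ᵥ v) := by
  rw [← mulVec_mulVec, ← mulVec_mulVec, dotProduct_mulVec v, vecMul_transpose]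

end QuadraticForm

section Moments

variable {Ω ι κ : Type*} [MeasurableSpace Ω] {μ : Measure Ω}

/-- Entrywise expectation: `Matrix` carries no global norm, so the Bochner integral of a
matrix-valued map is not available. -/
noncomputable def meanMatrix (μ : Measure Ω) (M : Ω → Matrix ι κ ℝ) : Matrix ι κ ℝ :=
  of fun i j => ∫ ω, M ω i j ∂μ

theorem meanMatrix_const_sub [IsProbabilityMeasure μ] (C : Matrix ι κ ℝ) {M : Ω → Matrix ι κ ℝ}
    (hM : ∀ i j, Integrable (fun ω => M ω i j) μ) :
    meanMatrix μ (fun ω => C - M ω) = C - meanMatrix μ M := by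
  ext i j
  simp [meanMatrix, integral_sub (integrable_const _) (hM i j)]

theorem ProbabilityTheory.IdentDistrib.meanMatrix_eq {m n : ℕ}
    {M N : Ω → Matrix (Fin m) (Fin n) ℝ} (h : IdentDistrib M N μ μ) :
    meanMatrix μ M = meanMatrix μ N :=
  ext fun i j => (h.comp (measurable_matrix_iff.1 measurable_id i j)).integral_eq

theorem integrable_transpose_mul_mul_apply [Fintype κ] {B : Ω → Matrix κ ι ℝ}
    (hB : ∀ i j, MemLp (fun ω => B ω i j) 2 μ) (P : Matrix κ κ ℝ) (a b : ι) :
    Integrable (fun ω => ((B ω)ᵀ * P * B ω) a b) μ := by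
  simp only [Matrix.mul_apply, transpose_apply]
  refine integrable_finsetSum _ fun j _ => MemLp.integrable_mul (p := 2) (q := 2) ?_ (hB j b)
  exact memLp_finsetSum _ fun i _ => (hB i a).mul_const (P i j)

theorem memLp_two_mul_of_indepFun {f g : Ω → ℝ} (hfg : IndepFun f g μ) (hf : MemLp f 2 μ)
    (hg : MemLp g 2 μ) : MemLp (fun ω => f ω * g ω) 2 μ := by
  have hsq : IndepFun (fun ω => f ω ^ 2) (fun ω => g ω ^ 2) μ :=
    hfg.comp (measurable_id.pow_const 2) (measurable_id.pow_const 2)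
  refine (memLp_two_iff_integrable_sq (hf.1.mul hg.1)).2 ?_
  convert hsq.integrable_mul hf.integrable_sq hg.integrable_sq using 1
  exact funext fun ω => mul_pow (f ω) (g ω) 2

theorem memLp_two_mulVec_apply_of_indepFun {m n : ℕ} {M : Ω → Matrix (Fin m) (Fin n) ℝ}
    {X : Ω → Fin n → ℝ} (hMX : IndepFun M X μ) (hM : ∀ i j, MemLp (fun ω => M ω i j) 2 μ)
    (hX : ∀ j, MemLp (fun ω => X ω j) 2 μ) (i : Fin m) :
    MemLp (fun ω => (M ω *ᵥ X ω) i) 2 μ := by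
  simp only [mulVec, dotProduct]
  refine memLp_finsetSum _ fun j _ => memLp_two_mul_of_indepFun ?_ (hM i j) (hX j)
  exact hMX.comp (measurable_matrix_iff.1 measurable_id i j) (measurable_pi_apply j)

variable [Fintype ι] {X : Ω → ι → ℝ}

theorem integrable_dotProduct_mulVec (hX : ∀ a b, Integrable (fun ω => X ω a * X ω b) μ)
    (N : Matrix ι ι ℝ) : Integrable (fun ω => X ω ⬝ᵥ (N *ᵥ X ω)) μ := by
  simp only [dotProduct_mulVec_eq_sum]
  exact integrable_finsetSum _ fun a _ => integrable_finsetSum _ fun b _ =>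
    (hX a b).mul_const _

theorem integral_dotProduct_mulVec_eq_sum {M : Ω → Matrix ι ι ℝ}
    (h : ∀ a b, Integrable (fun ω => X ω a * X ω b * M ω a b) μ) :
    ∫ ω, X ω ⬝ᵥ (M ω *ᵥ X ω) ∂μ = ∑ a, ∑ b, ∫ ω, X ω a * X ω b * M ω a b ∂μ := by
  simp only [dotProduct_mulVec_eq_sum]
  rw [integral_finsetSum _ fun a _ => integrable_finsetSum _ fun b _ => h a b]
  exact Finset.sum_congr rfl fun a _ => integral_finsetSum _ fun b _ => h a b

theorem integral_dotProduct_mulVec_of_indepFun {n : ℕ} {X : Ω → Fin n → ℝ}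
    {M : Ω → Matrix (Fin n) (Fin n) ℝ} (hXM : IndepFun X M μ)
    (hX : ∀ a b, Integrable (fun ω => X ω a * X ω b) μ)
    (hM : ∀ a b, Integrable (fun ω => M ω a b) μ) :
    ∫ ω, X ω ⬝ᵥ (M ω *ᵥ X ω) ∂μ = ∫ ω, X ω ⬝ᵥ (meanMatrix μ M *ᵥ X ω) ∂μ := by
  have hind : ∀ a b, IndepFun (fun ω => X ω a * X ω b) (fun ω => M ω a b) μ := fun a b =>
    hXM.comp ((measurable_pi_apply a).mul (measurable_pi_apply b))
      (measurable_matrix_iff.1 measurable_id a b)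
  rw [integral_dotProduct_mulVec_eq_sum fun a b => (hind a b).integrable_mul (hX a b) (hM a b),
    integral_dotProduct_mulVec_eq_sum (M := fun _ => meanMatrix μ M) fun a b =>
      (hX a b).mul_const _]
  refine Finset.sum_congr rfl fun a _ => Finset.sum_congr rfl fun b _ => ?_
  rw [(hind a b).integral_fun_mul_eq_mul_integral (hX a b).1 (hM a b).1, integral_mul_const]
  rfl

theorem integral_dotProduct_mulVec_le_of_posSemidef
    (hX : ∀ a b, Integrable (fun ω => X ω a * X ω b) μ) {P Q : Matrix ι ι ℝ} {c : ℝ}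
    (hPQ : (c • P - Q).PosSemidef) :
    ∫ ω, X ω ⬝ᵥ (Q *ᵥ X ω) ∂μ ≤ c * ∫ ω, X ω ⬝ᵥ (P *ᵥ X ω) ∂μ := by
  have hnonneg : 0 ≤ ∫ ω, X ω ⬝ᵥ ((c • P - Q) *ᵥ X ω) ∂μ :=
    integral_nonneg fun ω => hPQ.dotProduct_mulVec_nonneg (X ω)
  simp only [sub_mulVec, smul_mulVec, dotProduct_sub, dotProduct_smul, smul_eq_mul] at hnonneg
  rw [integral_sub ((integrable_dotProduct_mulVec hX P).const_mul c)
    (integrable_dotProduct_mulVec hX Q), integral_const_mul] at hnonneg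
  linarith

end Moments

section NoiseDriven

variable {Ω β γ : Type*} [mβ : MeasurableSpace β] [MeasurableSpace γ]
  {ξ : ℕ → Ω → β}

theorem measurable_iSup_comap_of_recursion {F : β → γ → γ}
    (hF : Measurable (Function.uncurry F)) {x : ℕ → Ω → γ} {x0 : γ} (h0 : x 0 = fun _ => x0)
    (hrec : ∀ k ω, x (k + 1) ω = F (ξ k ω) (x k ω)) (k : ℕ) :
    Measurable[⨆ i ∈ Set.Iio k, mβ.comap (ξ i)] (x k) := by
  induction k with
  | zero => rw [h0]; exact measurable_const
  | succ k ih =>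
    have hx : Measurable[⨆ i ∈ Set.Iio (k + 1), mβ.comap (ξ i)] (x k) :=
      ih.mono (biSup_mono fun i hi => Set.Iio_subset_Iio k.le_succ hi) le_rfl
    have hξ : Measurable[⨆ i ∈ Set.Iio (k + 1), mβ.comap (ξ i)] (ξ k) :=
      Measurable.of_comap_le (le_iSup₂_of_le k (Set.mem_Iio.2 k.lt_succ_self) le_rfl)
    rw [show x (k + 1) = fun ω => F (ξ k ω) (x k ω) from funext (hrec k)]
    exact hF.comp (hξ.prodMk hx)

theorem ProbabilityTheory.iIndepFun.indepFun_of_measurable_iSup_comap [MeasurableSpace Ω]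
    {μ : Measure Ω} (hξ : iIndepFun ξ μ)
    (hξm : ∀ i, Measurable (ξ i)) {Y : Ω → γ} {k : ℕ}
    (hY : Measurable[⨆ i ∈ Set.Iio k, mβ.comap (ξ i)] Y) : IndepFun Y (ξ k) μ := by
  rw [IndepFun_iff_Indep]
  have hpast := indep_iSup_of_disjoint (fun i => (hξm i).comap_le) hξ.iIndep
    (Set.disjoint_singleton_right.2 (Set.self_notMem_Iio (a := k)))
  refine indep_of_indep_of_le_right (indep_of_indep_of_le_left hpast hY.comap_le) ?_
  exact le_iSup₂_of_le k (Set.mem_singleton k) le_rfl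

end NoiseDriven

theorem memLp_two_of_mulVec_recursion {Ω : Type*} [MeasurableSpace Ω] {μ : Measure Ω} {n : ℕ}
    {M : ℕ → Ω → Matrix (Fin n) (Fin n) ℝ} {X : ℕ → Ω → Fin n → ℝ}
    (h0 : ∀ a, MemLp (fun ω => X 0 ω a) 2 μ) (hrec : ∀ k ω, X (k + 1) ω = M k ω *ᵥ X k ω)
    (hind : ∀ k, IndepFun (M k) (X k) μ) (hM : ∀ k i j, MemLp (fun ω => M k ω i j) 2 μ) :
    ∀ k a, MemLp (fun ω => X k ω a) 2 μ := by
  intro k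
  induction k with
  | zero => exact h0
  | succ k ih =>
    simp only [hrec]
    exact memLp_two_mulVec_apply_of_indepFun (hind k) (hM k) ih

theorem integral_mulVec_dotProduct_mulVec_le_of_indepFun {Ω : Type*} [MeasurableSpace Ω]
    {μ : Measure Ω} {n : ℕ} {X : Ω → Fin n → ℝ} {B : Ω → Matrix (Fin n) (Fin n) ℝ}
    (hXB : IndepFun X B μ) (hX : ∀ a, MemLp (fun ω => X ω a) 2 μ)
    (hB : ∀ i j, MemLp (fun ω => B ω i j) 2 μ) {P : Matrix (Fin n) (Fin n) ℝ} {c : ℝ}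
    (hPSD : (c • P - meanMatrix μ (fun ω => (B ω)ᵀ * P * B ω)).PosSemidef) :
    ∫ ω, (B ω *ᵥ X ω) ⬝ᵥ (P *ᵥ (B ω *ᵥ X ω)) ∂μ ≤ c * ∫ ω, X ω ⬝ᵥ (P *ᵥ X ω) ∂μ := by
  have hXX : ∀ a b, Integrable (fun ω => X ω a * X ω b) μ := fun a b =>
    (hX a).integrable_mul (p := 2) (q := 2) (hX b)
  have hXQ : IndepFun X (fun ω => (B ω)ᵀ * P * B ω) μ :=
    hXB.comp measurable_id (measurable_id.matrix_transpose_mul_mul P)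
  simp only [mulVec_dotProduct_mulVec_mulVec]
  rw [integral_dotProduct_mulVec_of_indepFun hXQ hXX (integrable_transpose_mul_mul_apply hB P)]
  exact integral_dotProduct_mulVec_le_of_posSemidef hXX hPSD

theorem lyapunov_inequality_implies_quadratic_stability_general
    {Ω : Type*} [MeasurableSpace Ω] (μ : Measure Ω) [IsProbabilityMeasure μ]
    {Z n : ℕ} (ξ : ℕ → Ω → (Fin Z → ℝ)) (hξm : ∀ k, Measurable (ξ k))
    (hindep : iIndepFun ξ μ)
    (hident : ∀ k, Measure.map (ξ k) μ = Measure.map (ξ 0) μ)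
    (A : (Fin Z → ℝ) → Matrix (Fin n) (Fin n) ℝ) (hA : Measurable A)
    (hAsq : ∀ i j, Integrable (fun ω => (A (ξ 0 ω) i j) ^ 2) μ)
    (x : (Fin n → ℝ) → ℕ → Ω → (Fin n → ℝ))
    (hx0 : ∀ x0, x x0 0 = fun _ => x0)
    (hxrec : ∀ x0 k ω, x x0 (k + 1) ω = A (ξ k ω) *ᵥ x x0 k ω)
    (P : Matrix (Fin n) (Fin n) ℝ)
    (lam : ℝ)
    (hLyap : Matrix.PosSemidef (Matrix.of fun i j =>
      ∫ ω, (lam ^ 2 • P - (A (ξ 0 ω))ᵀ * P * A (ξ 0 ω)) i j ∂μ)) :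
    ∀ (x0 : Fin n → ℝ) (k : ℕ),
      (∫ ω, x x0 (k + 1) ω ⬝ᵥ (P *ᵥ x x0 (k + 1) ω) ∂μ)
        ≤ lam ^ 2 * ∫ ω, x x0 k ω ⬝ᵥ (P *ᵥ x x0 k ω) ∂μ := by
  intro x0 k
  have hAm := measurable_matrix_iff.1 hA
  have hξk : ∀ m, IdentDistrib (ξ m) (ξ 0) μ μ := fun m =>
    ⟨(hξm m).aemeasurable, (hξm 0).aemeasurable, hident m⟩
  have hAL2 : ∀ m i j, MemLp (fun ω => A (ξ m ω) i j) 2 μ := fun m i j =>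
    ((hξk m).comp (hAm i j)).memLp_iff.2
      ((memLp_two_iff_integrable_sq ((hAm i j).comp (hξm 0)).aestronglyMeasurable).2 (hAsq i j))
  have hxξ : ∀ m, IndepFun (x x0 m) (ξ m) μ := fun m =>
    hindep.indepFun_of_measurable_iSup_comap hξm <|
      measurable_iSup_comap_of_recursion (ξ := ξ) (F := fun u v => A u *ᵥ v)
        ((hA.comp measurable_fst).matrix_mulVec measurable_snd) (hx0 x0) (hxrec x0) m
  have hAx : ∀ m, IndepFun (fun ω => A (ξ m ω)) (x x0 m) μ := fun m =>
    (hxξ m).symm.comp hA measurable_id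
  have hxL2 := memLp_two_of_mulVec_recursion (M := fun k ω => A (ξ k ω))
    (fun a => by simp only [hx0]; exact memLp_const _) (hxrec x0) hAx hAL2
  have hmean : meanMatrix μ (fun ω => (A (ξ k ω))ᵀ * P * A (ξ k ω))
      = meanMatrix μ (fun ω => (A (ξ 0 ω))ᵀ * P * A (ξ 0 ω)) :=
    ((hξk k).comp (hA.matrix_transpose_mul_mul P)).meanMatrix_eq
  simp only [hxrec]
  refine integral_mulVec_dotProduct_mulVec_le_of_indepFun (hAx k).symm (hxL2 k) (hAL2 k) ?_
  rwa [hmean, ← meanMatrix_const_sub _ (integrable_transpose_mul_mul_apply (hAL2 0) P)]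

/-- If `E[λ²P − A(ξ₀)ᵀPA(ξ₀)]` is positive semidefinite, then the system
`x_{k+1} = A(ξ_k)x_k` satisfies `E[x_{k+1}ᵀPx_{k+1}] ≤ λ²E[x_kᵀPx_k]` for all
deterministic initial states. -/
theorem lyapunov_inequality_implies_quadratic_stability
    {Ω : Type*} [MeasurableSpace Ω] (μ : Measure Ω) [IsProbabilityMeasure μ]
    {Z n : ℕ} (ξ : ℕ → Ω → (Fin Z → ℝ)) (hξm : ∀ k, Measurable (ξ k))
    (hindep : iIndepFun ξ μ)
    (hident : ∀ k, Measure.map (ξ k) μ = Measure.map (ξ 0) μ)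
    (A : (Fin Z → ℝ) → Matrix (Fin n) (Fin n) ℝ) (hA : Measurable A)
    (hAsq : ∀ i j, Integrable (fun ω => (A (ξ 0 ω) i j) ^ 2) μ)
    (x : (Fin n → ℝ) → ℕ → Ω → (Fin n → ℝ))
    (hx0 : ∀ x0, x x0 0 = fun _ => x0)
    (hxrec : ∀ x0 k ω, x x0 (k + 1) ω = A (ξ k ω) *ᵥ x x0 k ω)
    (P : Matrix (Fin n) (Fin n) ℝ) (hP : P.PosDef)
    (lam : ℝ) (hlam : lam ∈ Set.Ioo (0 : ℝ) 1)
    (hLyap : Matrix.PosSemidef (Matrix.of fun i j =>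
      ∫ ω, (lam ^ 2 • P - (A (ξ 0 ω))ᵀ * P * A (ξ 0 ω)) i j ∂μ)) :
    ∀ (x0 : Fin n → ℝ) (k : ℕ),
      (∫ ω, x x0 (k + 1) ω ⬝ᵥ (P *ᵥ x x0 (k + 1) ω) ∂μ)
        ≤ lam ^ 2 * ∫ ω, x x0 k ω ⬝ᵥ (P *ᵥ x x0 k ω) ∂μ :=
  lyapunov_inequality_implies_quadratic_stability_general μ ξ hξm hindep hident A hA hAsq x hx0
    hxrec P lam hLyap
end

section
/- Let A be an n×n real matrix, and let A' ∈ R^{n³×n} be formed by stacking the blocks Ā_1,…,Ā_n of a matrix Ā ∈ R^{n²×n²} satisfying ĀᵀĀ = row(A)ᵀ row(A), where row(A) is the row-major vectorization of A. Then for any symmetric n×n matrix P, (A')ᵀ (P ⊗ I_{n²}) A' = Aᵀ P A. -/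
/-!
Write `A'` for the stack of the column blocks of `Ā`. Entrywise,
`((A')ᵀ (P ⊗ I) A')_{ij} = ∑_{a,b} P_{ab} (ĀᵀĀ)_{(a,i),(b,j)}`, so the left-hand side depends on
`Ā` only through its Gram matrix `ĀᵀĀ`. Substituting `ĀᵀĀ = row(A)ᵀ row(A)` turns this into
`∑_{a,b} A_{ai} P_{ab} A_{bj} = (Aᵀ P A)_{ij}`.
-/

open Matrix
open scoped Kronecker

namespace Matrix

variable {R m n p : Type*} [CommSemiring R] [Fintype m] [Fintype p]

/-- The matrix `A'` obtained by stacking the column blocks `B_a = (B q (a, j))_{q, j}` of `B`. -/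
def stackColumnBlocks (B : Matrix p (m × n) R) : Matrix (m × p) n R :=
  of fun q j => B q.2 (q.1, j)

theorem stackColumnBlocks_transpose_mul_kronecker_one_mul_apply [DecidableEq p]
    (B : Matrix p (m × n) R) (P : Matrix m m R) (i j : n) :
    ((stackColumnBlocks B)ᵀ * (P ⊗ₖ (1 : Matrix p p R)) * stackColumnBlocks B) i j
      = ∑ a, ∑ b, P a b * (Bᵀ * B) (a, i) (b, j) := by
  simp only [stackColumnBlocks, mul_apply, transpose_apply, of_apply, kroneckerMap_apply,
    one_apply, Fintype.sum_prod_type, mul_ite, mul_one, mul_zero, Finset.sum_ite_eq',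
    Finset.mem_univ, if_true, Finset.sum_mul, Finset.mul_sum]
  rw [Finset.sum_comm_cycle]
  exact Finset.sum_congr rfl fun _ _ => Finset.sum_congr rfl fun _ _ =>
    Finset.sum_congr rfl fun _ _ => by ring

theorem transpose_mul_mul_apply_eq_sum [Fintype n] (A : Matrix m n R) (P : Matrix m m R)
    (i j : n) : (Aᵀ * P * A) i j = ∑ a, ∑ b, P a b * (A a i * A b j) := by
  simp only [mul_apply, transpose_apply, Finset.sum_mul]
  rw [Finset.sum_comm]
  exact Finset.sum_congr rfl fun _ _ => Finset.sum_congr rfl fun _ _ => by ring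

end Matrix

theorem stacked_decomposition_quadratic_identity_general
    {n : ℕ} (A : Matrix (Fin n) (Fin n) ℝ)
    (Abar : Matrix (Fin n × Fin n) (Fin n × Fin n) ℝ)
    (hAbar : Abarᵀ * Abar
      = Matrix.vecMulVec (fun p => A p.1 p.2) (fun p => A p.1 p.2))
    (P : Matrix (Fin n) (Fin n) ℝ) :
    (Matrix.of fun (q : Fin n × (Fin n × Fin n)) (j : Fin n) => Abar q.2 (q.1, j))ᵀ
        * (P ⊗ₖ (1 : Matrix (Fin n × Fin n) (Fin n × Fin n) ℝ))
        * (Matrix.of fun (q : Fin n × (Fin n × Fin n)) (j : Fin n) => Abar q.2 (q.1, j))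
      = Aᵀ * P * A := by
  ext i j
  rw [← stackColumnBlocks, stackColumnBlocks_transpose_mul_kronecker_one_mul_apply, hAbar,
    transpose_mul_mul_apply_eq_sum]
  simp only [vecMulVec_apply]

/-- Deterministic case of Lemma 2: if `ĀᵀĀ = row(A)ᵀ row(A)` and `A'` is obtained
by stacking the column blocks of `Ā`, then `(A')ᵀ (P ⊗ I_{n²}) A' = Aᵀ P A`. -/
theorem stacked_decomposition_quadratic_identity
    {n : ℕ} (A : Matrix (Fin n) (Fin n) ℝ)
    (Abar : Matrix (Fin n × Fin n) (Fin n × Fin n) ℝ)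
    (hAbar : Abarᵀ * Abar
      = Matrix.vecMulVec (fun p => A p.1 p.2) (fun p => A p.1 p.2))
    (P : Matrix (Fin n) (Fin n) ℝ) (hP : P.IsSymm) :
    (Matrix.of fun (q : Fin n × (Fin n × Fin n)) (j : Fin n) => Abar q.2 (q.1, j))ᵀ
        * (P ⊗ₖ (1 : Matrix (Fin n × Fin n) (Fin n × Fin n) ℝ))
        * (Matrix.of fun (q : Fin n × (Fin n × Fin n)) (j : Fin n) => Abar q.2 (q.1, j))
      = Aᵀ * P * A :=
  stacked_decomposition_quadratic_identity_general A Abar hAbar P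
end
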